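/- arXiv:1909.10869 — 2 statements merged into one kernel-verified Lean document; each statement's English description precedes it below -/
import Mathlib

section
/- Let Σ be a type, w : ℕ → Option Σ, ζ : Σ, u : ℕ, and let w' := Function.update w u (some ζ). Suppose there are positions with x_o ≤ z₁, z₂ ≤ x_c, x_c < y_o, y_o ≤ z₃, z₄ ≤ y_c such that z₁ ⤳_{w'} u, u ⤳_{w'} z₂, z₃ ⤳_{w'} v, v ⤳_{w'} z₄, w' v = some ζ, w[x_o,z₁] = w[y_o,z₃], and w[z₂,x_c] = w[z₄,y_c]. Then w'[x_o,x_c] = w'[y_o,y_c]. (Case 3.2 of the proof of Lemma 3.4 of the paper, illustrated in Figure 1: the newly inserted symbol acts as a bridge between two pairs of equal subwords.) -/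
/-- `y` carries the next symbol after `x` in the partial word `w`. -/
def Nxt {α : Type*} (w : ℕ → Option α) (x y : ℕ) : Prop :=
  w x ≠ none ∧ w y ≠ none ∧ x < y ∧ ∀ z, x < z → z < y → w z = none

/-- The subword of `w` between positions `i` and `j` (inclusive). -/
def subword {α : Type*} (w : ℕ → Option α) (i j : ℕ) : List α :=
  (List.range' i (j + 1 - i)).filterMap w

/-!
Around an inserted symbol `ζ` at `u`, with neighbours `z₁ ⤳ u ⤳ z₂`, the subword `w'[i, j]`
factors as `w'[i, z₁] ++ ζ :: w'[z₂, j]`, and the outer factors do not contain `u`, so they are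
subwords of `w`. Factoring both sides this way, at `u` and at `v`, the hypotheses match the
factors pairwise.
-/

section Subword

variable {α : Type*}

theorem Nxt.lt {w : ℕ → Option α} {x y : ℕ} (h : Nxt w x y) : x < y :=
  h.2.2.1

theorem subword_eq_toList_append (w : ℕ → Option α) {i j : ℕ} (h : i ≤ j) :
    subword w i j = (w i).toList ++ subword w (i + 1) j := by
  unfold subword
  rw [show j + 1 - i = (j + 1 - (i + 1)) + 1 by omega, List.range'_succ, List.filterMap_cons]
  cases w i <;> rfl

theorem subword_eq_append (w : ℕ → Option α) {i k j : ℕ} (hik : i ≤ k + 1) (hkj : k ≤ j) :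
    subword w i j = subword w i k ++ subword w (k + 1) j := by
  unfold subword
  have hrange := List.range'_append_1 (s := i) (m := k + 1 - i) (n := j - k)
  rw [show i + (k + 1 - i) = k + 1 by omega, show k + 1 - i + (j - k) = j + 1 - i by omega] at hrange
  rw [← List.filterMap_append, show j + 1 - (k + 1) = j - k by omega, hrange]

theorem subword_eq_of_forall_eq_none (w : ℕ → Option α) {i k j : ℕ} (hik : i ≤ k)
    (hkj : k ≤ j + 1) (hnone : ∀ t, i ≤ t → t < k → w t = none) :
    subword w i j = subword w k j := by
  induction k, hik using Nat.le_induction with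
  | base => rfl
  | succ k hik ih =>
    rw [ih (by omega) fun t hit htk => hnone t hit (by omega),
      subword_eq_toList_append w (by omega), hnone k hik k.lt_succ_self]
    rfl

theorem subword_update_of_notMem (w : ℕ → Option α) (a : Option α) {u i j : ℕ}
    (h : u < i ∨ j < u) :
    subword (Function.update w u a) i j = subword w i j :=
  List.filterMap_congr fun t ht => by
    rw [List.mem_range'_1] at ht
    exact Function.update_of_ne (by omega) _ _

theorem subword_eq_append_cons_of_nxt (w : ℕ → Option α) {ζ : α} {i j a u b : ℕ}
    (hia : i ≤ a) (hbj : b ≤ j) (ha : Nxt w a u) (hb : Nxt w u b) (hu : w u = some ζ) :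
    subword w i j = subword w i a ++ ζ :: subword w b j := by
  obtain ⟨-, -, hau, hgap_a⟩ := ha
  obtain ⟨-, -, hub, hgap_b⟩ := hb
  calc subword w i j = subword w i a ++ subword w (a + 1) j :=
        subword_eq_append w (by omega) (by omega)
    _ = subword w i a ++ subword w u j := by
        rw [subword_eq_of_forall_eq_none w hau (by omega) hgap_a]
    _ = subword w i a ++ ζ :: subword w (u + 1) j := by
        rw [subword_eq_toList_append w (i := u) (by omega), hu]
        rfl
    _ = subword w i a ++ ζ :: subword w b j := by
        rw [subword_eq_of_forall_eq_none w hub (by omega) hgap_b]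

end Subword

theorem insertion_bridge_case {α : Type*} (w : ℕ → Option α) (ζ : α)
    (u xo xc yo yc z₁ z₂ z₃ z₄ v : ℕ)
    (h₁ : xo ≤ z₁) (h₂ : z₂ ≤ xc) (h₃ : xc < yo) (h₄ : yo ≤ z₃) (h₅ : z₄ ≤ yc)
    (hn₁ : Nxt (Function.update w u (some ζ)) z₁ u)
    (hn₂ : Nxt (Function.update w u (some ζ)) u z₂)
    (hn₃ : Nxt (Function.update w u (some ζ)) z₃ v)
    (hn₄ : Nxt (Function.update w u (some ζ)) v z₄)
    (hv : (Function.update w u (some ζ)) v = some ζ)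
    (heq₁ : subword w xo z₁ = subword w yo z₃)
    (heq₂ : subword w z₂ xc = subword w z₄ yc) :
    subword (Function.update w u (some ζ)) xo xc =
      subword (Function.update w u (some ζ)) yo yc := by
  have hz₁u := hn₁.lt
  have huz₂ := hn₂.lt
  have hz₃v := hn₃.lt
  have hvz₄ := hn₄.lt
  rw [subword_eq_append_cons_of_nxt _ h₁ h₂ hn₁ hn₂ (Function.update_self u _ w),
    subword_eq_append_cons_of_nxt _ h₄ h₅ hn₃ hn₄ hv,
    subword_update_of_notMem w _ (Or.inr hz₁u), subword_update_of_notMem w _ (Or.inl huz₂),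
    subword_update_of_notMem w _ (Or.inl (by omega : u < yo)),
    subword_update_of_notMem w _ (Or.inl (by omega : u < z₄)), heq₁, heq₂]
end

section
/- Let Σ be a type, w : ℕ → Option Σ a partial word, and x ≤ y positions with w x ≠ none and w y ≠ none. Then the length of w[x,y] is a power of two (i.e., there exists n : ℕ with (w[x,y]).length = 2^n) if and only if (w[x,y]).length = 1, or there exist positions z₁, z₂ with x ≤ z₁, z₁ ⤳_w z₂, z₂ ≤ y, such that the length of w[x,z₁] is a power of two and (w[x,z₁]).length = (w[z₂,y]).length. (The recursive invariant underlying Lemma 4.2 of the paper, by which the language of all words whose length is a power of two is maintained in DynCQ.) -/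
/-! Halving a word of length `2 ^ (n + 1)` just after its `2 ^ n`-th symbol `z₁` leaves a
remainder that starts at the symbol `z₂` following `z₁`, because the positions strictly between
`z₁` and `z₂` carry no symbol; conversely, two halves of equal length `2 ^ n` glue to a word of
length `2 ^ (n + 1)`. The position `z₁` exists because the length of `w[x, z]` grows by at most
one as `z` increases. -/

section Subword

variable {α : Type*} (w : ℕ → Option α)

theorem subword_eq_nil_of_lt {x y : ℕ} (h : y < x) : subword w x y = [] := by
  simp [subword, show y + 1 - x = 0 by omega]

theorem subword_self (x : ℕ) : subword w x x = (w x).toList := by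
  cases h : w x <;> simp [subword, h]

theorem subword_succ_right {x y : ℕ} (hxy : x ≤ y + 1) :
    subword w x (y + 1) = subword w x y ++ (w (y + 1)).toList := by
  rw [subword, show y + 1 + 1 - x = (y + 1 - x) + 1 by omega, List.range'_concat,
    List.filterMap_append, Nat.one_mul, show x + (y + 1 - x) = y + 1 by omega]
  cases h : w (y + 1) <;> simp [h, subword]

theorem subword_append {x z y : ℕ} (hxz : x ≤ z) (hzy : z ≤ y) :
    subword w x y = subword w x z ++ subword w (z + 1) y := by
  have h := List.range'_append (s := x) (m := z + 1 - x) (n := y + 1 - (z + 1)) (step := 1)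
  rw [show x + 1 * (z + 1 - x) = z + 1 by omega,
    show z + 1 - x + (y + 1 - (z + 1)) = y + 1 - x by omega] at h
  rw [subword, subword, subword, ← h, List.filterMap_append]

theorem subword_succ_left_of_eq_none {i : ℕ} (y : ℕ) (hi : w i = none) :
    subword w i y = subword w (i + 1) y := by
  rcases Nat.lt_or_ge y i with hyi | hiy
  · rw [subword_eq_nil_of_lt w hyi, subword_eq_nil_of_lt w (by omega)]
  · rw [subword, show y + 1 - i = (y + 1 - (i + 1)) + 1 by omega, List.range'_succ,
      List.filterMap_cons, hi, subword]

theorem subword_eq_of_forall_eq_none_s17 {i j : ℕ} (y : ℕ) (hij : i ≤ j)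
    (h : ∀ k, i ≤ k → k < j → w k = none) : subword w i y = subword w j y := by
  induction j, hij using Nat.le_induction with
  | base => rfl
  | succ j hij ih =>
    rw [ih fun k hik hkj => h k hik (by omega),
      subword_succ_left_of_eq_none w y (h j hij (by omega))]

theorem Nxt.subword_succ_eq {z z' : ℕ} (h : Nxt w z z') (y : ℕ) :
    subword w (z + 1) y = subword w z' y :=
  subword_eq_of_forall_eq_none_s17 w y h.2.2.1 h.2.2.2

theorem exists_nxt_le_of_subword_ne_nil {z y : ℕ} (hz : w z ≠ none)
    (hne : subword w (z + 1) y ≠ []) : ∃ z', Nxt w z z' ∧ z' ≤ y := by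
  classical
  obtain ⟨a, ha⟩ := List.exists_mem_of_ne_nil _ hne
  obtain ⟨p, hp, hpa⟩ := List.mem_filterMap.mp ha
  rw [List.mem_range'_1] at hp
  have hzp : z < p ∧ w p ≠ none := ⟨by omega, by simp [hpa]⟩
  have hex : ∃ p, z < p ∧ w p ≠ none := ⟨p, hzp⟩
  obtain ⟨hzz', hz'⟩ := Nat.find_spec hex
  refine ⟨Nat.find hex, ⟨hz, hz', hzz', fun k hzk hkz' => ?_⟩, ?_⟩
  · by_contra hk
    exact Nat.find_min hex hkz' ⟨hzk, hk⟩
  · exact (Nat.find_min' hex hzp).trans (by omega)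

theorem exists_length_subword_eq {x y k : ℕ} (hk : 1 ≤ k) (hky : k ≤ (subword w x y).length) :
    ∃ z, x ≤ z ∧ z ≤ y ∧ w z ≠ none ∧ (subword w x z).length = k := by
  rcases Nat.lt_or_ge y x with hyx | hxy
  · simp [subword_eq_nil_of_lt w hyx] at hky
    omega
  induction y, hxy using Nat.le_induction with
  | base =>
    rw [subword_self] at hky
    cases h : w x with
    | none => simp [h] at hky; omega
    | some a =>
      simp only [h, Option.toList_some, List.length_singleton] at hky
      exact ⟨x, le_rfl, le_rfl, by simp [h], by simp [subword_self, h]; omega⟩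
  | succ y hxy ih =>
    rw [subword_succ_right w (by omega), List.length_append] at hky
    by_cases hle : k ≤ (subword w x y).length
    · obtain ⟨z, hxz, hzy, hz, hlen⟩ := ih hle
      exact ⟨z, hxz, by omega, hz, hlen⟩
    cases h : w (y + 1) with
    | none => simp [h] at hky; omega
    | some a =>
      simp only [h, Option.toList_some, List.length_singleton] at hky
      refine ⟨y + 1, by omega, le_rfl, by simp [h], ?_⟩
      rw [subword_succ_right w (by omega), List.length_append, h, Option.toList_some,
        List.length_singleton]
      omega

end Subword

theorem pow_two_length_recursive_invariant_general {α : Type*} (w : ℕ → Option α) (x y : ℕ) :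
    (∃ n : ℕ, (subword w x y).length = 2 ^ n) ↔
      (subword w x y).length = 1 ∨
        ∃ z₁ z₂ : ℕ, x ≤ z₁ ∧ Nxt w z₁ z₂ ∧ z₂ ≤ y ∧
          (∃ n : ℕ, (subword w x z₁).length = 2 ^ n) ∧
          (subword w x z₁).length = (subword w z₂ y).length := by
  constructor
  · rintro ⟨_ | n, hn⟩
    · exact Or.inl hn
    obtain ⟨z₁, hxz₁, hz₁y, hz₁, hlen₁⟩ :=
      exists_length_subword_eq w Nat.one_le_two_pow (k := 2 ^ n) (by rw [hn, pow_succ]; omega)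
    have hrest : (subword w (z₁ + 1) y).length = 2 ^ n := by
      rw [subword_append w hxz₁ hz₁y, List.length_append, hlen₁, pow_succ] at hn
      omega
    obtain ⟨z₂, hnxt, hz₂y⟩ := exists_nxt_le_of_subword_ne_nil w hz₁
      (List.ne_nil_of_length_pos (hrest ▸ Nat.two_pow_pos n))
    refine Or.inr ⟨z₁, z₂, hxz₁, hnxt, hz₂y, ⟨n, hlen₁⟩, ?_⟩
    rw [hlen₁, ← hnxt.subword_succ_eq, hrest]
  · rintro (h1 | ⟨z₁, z₂, hxz₁, hnxt, hz₂y, ⟨n, hn⟩, heq⟩)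
    · exact ⟨0, h1⟩
    · refine ⟨n + 1, ?_⟩
      rw [subword_append w hxz₁ (hnxt.2.2.1.le.trans hz₂y), List.length_append,
        hnxt.subword_succ_eq, ← heq, hn, pow_succ, mul_two]

theorem pow_two_length_recursive_invariant {α : Type*} (w : ℕ → Option α) (x y : ℕ)
    (hxy : x ≤ y) (hx : w x ≠ none) (hy : w y ≠ none) :
    (∃ n : ℕ, (subword w x y).length = 2 ^ n) ↔
      (subword w x y).length = 1 ∨
        ∃ z₁ z₂ : ℕ, x ≤ z₁ ∧ Nxt w z₁ z₂ ∧ z₂ ≤ y ∧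
          (∃ n : ℕ, (subword w x z₁).length = 2 ^ n) ∧
          (subword w x z₁).length = (subword w z₂ y).length :=
  pow_two_length_recursive_invariant_general w x y
end
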